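/- arXiv:math/9907039 — 2 statements merged into one kernel-verified Lean document; each statement's English description precedes it below -/
import Mathlib

section
/- Let D : E → F be a linear map between finite-dimensional complex inner product spaces, A = [[0, D*],[D, 0]] on E ⊕ F, and let L₊ be the span of eigenvectors of A with nonnegative eigenvalue. Let P₀ : E ⊕ F → F be the projection onto the second summand. Then the kernel of P₀ restricted to L₊ equals ker D ⊕ 0, and P₀ restricted to L₊ is surjective onto F. -/
/-- The self-adjoint operator `A = [[0, D*], [D, 0]]` on `E ⊕ F`. -/
noncomputable def offDiagOp {E F : Type*}
    [NormedAddCommGroup E] [InnerProductSpace ℂ E] [FiniteDimensional ℂ E]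
    [NormedAddCommGroup F] [InnerProductSpace ℂ F] [FiniteDimensional ℂ F]
    (D : E →ₗ[ℂ] F) : (E × F) →ₗ[ℂ] (E × F) :=
  LinearMap.prod
    ((LinearMap.adjoint D) ∘ₗ LinearMap.snd ℂ E F)
    (D ∘ₗ LinearMap.fst ℂ E F)

/-- The nonnegative spectral subspace of `A = [[0, D*], [D, 0]]`:
the span of eigenvectors with nonnegative (real) eigenvalues. -/
noncomputable def nonnegSpectralSubspace {E F : Type*}
    [NormedAddCommGroup E] [InnerProductSpace ℂ E] [FiniteDimensional ℂ E]
    [NormedAddCommGroup F] [InnerProductSpace ℂ F] [FiniteDimensional ℂ F]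
    (D : E →ₗ[ℂ] F) : Submodule ℂ (E × F) :=
  ⨆ (lam : ℝ) (_ : 0 ≤ lam), Module.End.eigenspace (offDiagOp D) (lam : ℂ)

/-!
For the `L²` inner product on `E × F`, `A = offDiagOp D` is self-adjoint, so `E × F` is the
independent sum of the eigenspaces `V r` of `A`, `r` real. The reflection `σ (u, v) = (u, -v)`
anticommutes with `A`, hence maps `V r` to `V (-r)` and `L₊ = ⨆ r ≥ 0, V r` into
`L₋ = ⨆ r ≤ 0, V r`. A vector `(u, 0) ∈ L₊` is fixed by `σ`, so it lies in
`L₊ ⊓ L₋ = V 0 = ker A`, i.e. `D u = 0`. For surjectivity, `E × F = L₊ ⊔ L₋`, and the second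
components of vectors of `L₋` are, up to sign, those of vectors of `σ L₋ ≤ L₊`.
-/

theorem iSupIndep.biSup_inf_biSup {α ι : Type*} [CompleteLattice α] [IsModularLattice α]
    [IsCompactlyGenerated α] {f : ι → α} (hf : iSupIndep f) (s t : Set ι) :
    (⨆ i ∈ s, f i) ⊓ (⨆ i ∈ t, f i) = ⨆ i ∈ s ∩ t, f i := by
  have hle : (⨆ i ∈ s ∩ t, f i) ≤ ⨆ i ∈ t, f i := biSup_mono fun _ ↦ And.right
  refine le_antisymm (le_of_eq ?_) (le_inf (biSup_mono fun _ ↦ And.left) hle)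
  have hdisj : Disjoint (⨆ i ∈ s \ t, f i) (⨆ i ∈ t, f i) :=
    hf.disjoint_biSup_biSup Set.disjoint_sdiff_left
  calc (⨆ i ∈ s, f i) ⊓ (⨆ i ∈ t, f i)
      = ((⨆ i ∈ s ∩ t, f i) ⊔ ⨆ i ∈ s \ t, f i) ⊓ (⨆ i ∈ t, f i) := by
        rw [← iSup_union, Set.inter_union_sdiff]
    _ = ⨆ i ∈ s ∩ t, f i := by
        rw [sup_inf_assoc_of_le _ hle, hdisj.eq_bot, sup_bot_eq]

theorem LinearMap.IsSymmetric.iSup_eigenspace_ofReal_eq_top {𝕜 E : Type*} [RCLike 𝕜]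
    [NormedAddCommGroup E] [InnerProductSpace 𝕜 E] [FiniteDimensional 𝕜 E] {T : E →ₗ[𝕜] E}
    (hT : T.IsSymmetric) : ⨆ r : ℝ, Module.End.eigenspace T (r : 𝕜) = ⊤ := by
  let b := (hT.eigenvectorBasis rfl).toBasis
  rw [eq_top_iff, ← b.span_eq, Submodule.span_le]
  rintro _ ⟨i, rfl⟩
  refine Submodule.mem_iSup_of_mem (hT.eigenvalues rfl i) ?_
  simp [b, hT.apply_eigenvectorBasis]

namespace Module.End

variable {R M : Type*} [CommRing R] [AddCommGroup M] [Module R M]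

theorem eigenspace_conj {N : Type*} [AddCommGroup N] [Module R N] (e : M ≃ₗ[R] N)
    (f : Module.End R M) (μ : R) :
    eigenspace (e.conj f) μ = (eigenspace f μ).map (e : M →ₗ[R] N) := by
  ext x
  rw [Submodule.mem_map_equiv, mem_eigenspace_iff, mem_eigenspace_iff, LinearEquiv.conj_apply,
    LinearMap.comp_apply, LinearMap.comp_apply, LinearEquiv.coe_coe, LinearEquiv.coe_coe,
    ← e.eq_symm_apply, map_smul]

theorem map_eigenspace_le_of_comp_eq_neg {f g : Module.End R M} (h : f ∘ₗ g = -(g ∘ₗ f))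
    (μ : R) : (eigenspace f μ).map g ≤ eigenspace f (-μ) := by
  rintro _ ⟨x, hx, rfl⟩
  rw [SetLike.mem_coe, mem_eigenspace_iff] at hx
  rw [mem_eigenspace_iff]
  calc f (g x) = -g (f x) := LinearMap.congr_fun h x
    _ = (-μ) • g x := by rw [hx, map_smul, neg_smul]

end Module.End

def negSnd (R M N : Type*) [Ring R] [AddCommGroup M] [Module R M] [AddCommGroup N] [Module R N] :
    M × N →ₗ[R] M × N :=
  LinearMap.prodMap LinearMap.id (-LinearMap.id)

section negSnd

variable {R M N : Type*} [Ring R] [AddCommGroup M] [Module R M] [AddCommGroup N] [Module R N]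

@[simp]
theorem negSnd_apply (x : M × N) : negSnd R M N x = (x.1, -x.2) := rfl

theorem snd_comp_negSnd : LinearMap.snd R M N ∘ₗ negSnd R M N = -LinearMap.snd R M N := by
  ext <;> simp

theorem map_snd_le_map_snd_of_map_negSnd_le {p q : Submodule R (M × N)}
    (h : p.map (negSnd R M N) ≤ q) :
    p.map (LinearMap.snd R M N) ≤ q.map (LinearMap.snd R M N) :=
  calc p.map (LinearMap.snd R M N)
      = (p.map (negSnd R M N)).map (LinearMap.snd R M N) := by
        rw [← Submodule.map_comp, snd_comp_negSnd, Submodule.map_neg]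
    _ ≤ q.map (LinearMap.snd R M N) := Submodule.map_mono h

end negSnd

section offDiagOp

variable {E F : Type*}
    [NormedAddCommGroup E] [InnerProductSpace ℂ E] [FiniteDimensional ℂ E]
    [NormedAddCommGroup F] [InnerProductSpace ℂ F] [FiniteDimensional ℂ F]
    (D : E →ₗ[ℂ] F)

theorem offDiagOp_apply (x : E × F) : offDiagOp D x = (LinearMap.adjoint D x.2, D x.1) := rfl

theorem offDiagOp_comp_negSnd :
    offDiagOp D ∘ₗ negSnd ℂ E F = -(negSnd ℂ E F ∘ₗ offDiagOp D) := by
  ext <;> simp [offDiagOp_apply]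

theorem isSymmetric_conj_offDiagOp :
    ((WithLp.linearEquiv 2 ℂ (E × F)).symm.conj (offDiagOp D)).IsSymmetric := by
  intro x y
  simp [offDiagOp_apply, WithLp.prod_inner_apply, LinearMap.adjoint_inner_left,
    LinearMap.adjoint_inner_right, add_comm]

noncomputable def spectralSubspace (s : Set ℝ) : Submodule ℂ (E × F) :=
  ⨆ r ∈ s, Module.End.eigenspace (offDiagOp D) (r : ℂ)

theorem nonnegSpectralSubspace_eq : nonnegSpectralSubspace D = spectralSubspace D (Set.Ici 0) :=
  rfl

theorem spectralSubspace_singleton (r : ℝ) :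
    spectralSubspace D {r} = Module.End.eigenspace (offDiagOp D) (r : ℂ) :=
  iSup_singleton

theorem spectralSubspace_union (s t : Set ℝ) :
    spectralSubspace D (s ∪ t) = spectralSubspace D s ⊔ spectralSubspace D t :=
  iSup_union

theorem spectralSubspace_inter (s t : Set ℝ) :
    spectralSubspace D s ⊓ spectralSubspace D t = spectralSubspace D (s ∩ t) :=
  ((Module.End.eigenspaces_iSupIndep (offDiagOp D)).comp Complex.ofReal_injective).biSup_inf_biSup
    s t

theorem spectralSubspace_univ : spectralSubspace D Set.univ = ⊤ := by
  have h := (isSymmetric_conj_offDiagOp D).iSup_eigenspace_ofReal_eq_top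
  simp only [Module.End.eigenspace_conj, ← Submodule.map_iSup, Submodule.map_eq_top_iff] at h
  simpa [spectralSubspace] using h

theorem map_negSnd_spectralSubspace (s : Set ℝ) :
    (spectralSubspace D s).map (negSnd ℂ E F) ≤ spectralSubspace D (-s) := by
  simp only [spectralSubspace, Submodule.map_iSup]
  refine iSup₂_le fun r hr ↦ le_trans ?_ (le_biSup _ (Set.neg_mem_neg.2 hr))
  simpa using Module.End.map_eigenspace_le_of_comp_eq_neg (offDiagOp_comp_negSnd D) (r : ℂ)

theorem spectralSubspace_Ici_inf_ker_snd_le :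
    spectralSubspace D (Set.Ici 0) ⊓ LinearMap.ker (LinearMap.snd ℂ E F) ≤
      Module.End.eigenspace (offDiagOp D) 0 := by
  rintro x ⟨hx, hx2 : x.2 = 0⟩
  have hfix : negSnd ℂ E F x = x := Prod.ext rfl (by simp [hx2])
  have hx' : x ∈ spectralSubspace D (Set.Iic 0) := by
    simpa [hfix, Set.neg_Ici] using map_negSnd_spectralSubspace D _ (Submodule.mem_map_of_mem hx)
  have := Submodule.mem_inf.2 ⟨hx, hx'⟩
  rwa [spectralSubspace_inter, Set.Ici_inter_Iic, Set.Icc_self, spectralSubspace_singleton,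
    Complex.ofReal_zero] at this

theorem spectralSubspace_Ici_inf_ker_snd :
    spectralSubspace D (Set.Ici 0) ⊓ LinearMap.ker (LinearMap.snd ℂ E F) =
      (LinearMap.ker D).map (LinearMap.inl ℂ E F) := by
  apply le_antisymm
  · intro x hx
    have hAx := Module.End.mem_eigenspace_iff.1 (spectralSubspace_Ici_inf_ker_snd_le D hx)
    have hD : D x.1 = 0 := by simpa [offDiagOp_apply] using congrArg Prod.snd hAx
    exact ⟨x.1, hD, Prod.ext rfl (Submodule.mem_inf.1 hx).2.symm⟩
  · rintro _ ⟨u, hu, rfl⟩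
    have hAu : LinearMap.inl ℂ E F u ∈ Module.End.eigenspace (offDiagOp D) ((0 : ℝ) : ℂ) := by
      simp_all [offDiagOp_apply]
    refine ⟨?_, rfl⟩
    exact le_biSup (fun r : ℝ ↦ Module.End.eigenspace (offDiagOp D) (r : ℂ)) Set.self_mem_Ici hAu

theorem map_snd_spectralSubspace_Ici :
    (spectralSubspace D (Set.Ici 0)).map (LinearMap.snd ℂ E F) = ⊤ := by
  have hsplit : spectralSubspace D (Set.Ici 0) ⊔ spectralSubspace D (Set.Iic 0) = ⊤ := by
    rw [← spectralSubspace_union, Set.Ici_union_Iic, spectralSubspace_univ]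
  have hneg : (spectralSubspace D (Set.Iic 0)).map (LinearMap.snd ℂ E F) ≤
      (spectralSubspace D (Set.Ici 0)).map (LinearMap.snd ℂ E F) := by
    apply map_snd_le_map_snd_of_map_negSnd_le
    simpa using map_negSnd_spectralSubspace D (Set.Iic 0)
  rw [eq_top_iff, ← Submodule.range_snd (R := ℂ) (M := E), ← Submodule.map_top, ← hsplit,
    Submodule.map_sup]
  exact sup_le le_rfl hneg

end offDiagOp

theorem stmt_8 {E F : Type*}
    [NormedAddCommGroup E] [InnerProductSpace ℂ E] [FiniteDimensional ℂ E]
    [NormedAddCommGroup F] [InnerProductSpace ℂ F] [FiniteDimensional ℂ F]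
    (D : E →ₗ[ℂ] F) :
    nonnegSpectralSubspace D ⊓ LinearMap.ker (LinearMap.snd ℂ E F) =
        Submodule.map (LinearMap.inl ℂ E F) (LinearMap.ker D) ∧
      Submodule.map (LinearMap.snd ℂ E F) (nonnegSpectralSubspace D) = ⊤ := by
  rw [nonnegSpectralSubspace_eq]
  exact ⟨spectralSubspace_Ici_inf_ker_snd D, map_snd_spectralSubspace_Ici D⟩
end

section
/- Let H be a Hilbert space, P₁, P₂ orthogonal projections with closed ranges L₁ = Im P₁, L₂ = Im P₂, and suppose P₁ − P₂ is a compact operator. Then the operator P₂ restricted to L₁, viewed as a map L₁ → L₂, is Fredholm. -/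
/-!
For `x ∈ L₁ = range P₁` we have `P₂ x = x - (P₁ - P₂) x`, so up to the inclusions of `L₁` and
`L₂` into `H`, the map `f` is an isometry minus a compact operator. Such a map has
finite-dimensional kernel (its unit ball is mapped isometrically into a compact set) and is bounded
below on the orthogonal complement of its kernel (by a subsequence argument), hence has closed
range. A vector `w ∈ L₂` orthogonal to the range of `f` satisfies `P₁ w = 0`, so it is fixed by
the compact operator `P₂ - P₁`; these vectors again form a finite-dimensional space.
-/

open Filter Topology ContinuousLinearMap
open scoped InnerProductSpace

section

variable {𝕜 E F : Type*} [NontriviallyNormedField 𝕜]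
  [NormedAddCommGroup E] [NormedSpace 𝕜 E] [CompleteSpace E]
  [NormedAddCommGroup F] [NormedSpace 𝕜 F]

theorem LinearIsometry.finiteDimensional_ker_sub_of_isCompactOperator [CompleteSpace 𝕜]
    (J : E →ₗᵢ[𝕜] F) {K : E →L[𝕜] F} (hK : IsCompactOperator K) :
    FiniteDimensional 𝕜 (J.toContinuousLinearMap - K).ker := by
  set S := J.toContinuousLinearMap - K
  have : CompleteSpace S.ker := S.isClosed_ker.completeSpace_coe
  obtain ⟨C, hC, hKC⟩ := hK.image_closedBall_subset_compact 1
  have hJι : Isometry (J ∘ S.ker.subtype) := J.isometry.comp isometry_subtype_coe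
  refine .of_isCompact_closedBall₀ 𝕜 one_pos <|
    (hJι.isClosedEmbedding.isCompact_preimage hC).of_isClosed_subset Metric.isClosed_closedBall ?_
  rintro ⟨x, hx⟩ hx1
  have hJK : J x = K x := sub_eq_zero.mp hx
  simp only [Set.mem_preimage, Function.comp_apply, Submodule.coe_subtype, hJK]
  exact hKC ⟨x, by simpa using hx1, rfl⟩

theorem LinearIsometry.exists_tendsto_subseq_of_tendsto_sub_apply
    (J : E →ₗᵢ[𝕜] F) {K : E →L[𝕜] F} (hK : IsCompactOperator K) {v : ℕ → E}
    (hv : ∀ n, ‖v n‖ ≤ 1)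
    (hSv : Tendsto (fun n ↦ (J.toContinuousLinearMap - K) (v n)) atTop (𝓝 0)) :
    ∃ z, ∃ φ : ℕ → ℕ, StrictMono φ ∧ Tendsto (v ∘ φ) atTop (𝓝 z) := by
  obtain ⟨C, hC, hKC⟩ := hK.image_closedBall_subset_compact 1
  obtain ⟨y, -, φ, hφ, hKy⟩ :=
    hC.tendsto_subseq fun n ↦ hKC ⟨v n, mem_closedBall_zero_iff.mpr (hv n), rfl⟩
  have hJy : Tendsto (fun n ↦ J (v (φ n))) atTop (𝓝 y) := by
    simpa using (hSv.comp hφ.tendsto_atTop).add hKy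
  have hcauchy : CauchySeq (v ∘ φ) := by
    refine J.isometry.isUniformInducing.cauchy_map_iff.mp ?_
    rw [Filter.map_map]
    exact hJy.cauchySeq
  obtain ⟨z, hz⟩ := cauchySeq_tendsto_of_complete hcauchy
  exact ⟨z, φ, hφ, hz⟩

end

section

variable {𝕜 E F : Type*} [RCLike 𝕜]
  [NormedAddCommGroup E] [NormedSpace 𝕜 E] [CompleteSpace E]
  [NormedAddCommGroup F] [NormedSpace 𝕜 F]

theorem LinearIsometry.exists_antilipschitzWith_sub_of_isCompactOperator
    (J : E →ₗᵢ[𝕜] F) {K : E →L[𝕜] F} (hK : IsCompactOperator K)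
    (hinj : Function.Injective (J.toContinuousLinearMap - K)) :
    ∃ C, AntilipschitzWith C (J.toContinuousLinearMap - K) := by
  set S := J.toContinuousLinearMap - K
  rw [antilipschitzWith_iff_exists_mul_le_norm]
  by_contra! h
  choose x hx using fun n : ℕ ↦ h (1 / (n + 1)) (by positivity)
  have hx0 : ∀ n, x n ≠ 0 := fun n h0 ↦ by simpa [h0] using hx n
  set v : ℕ → E := fun n ↦ (‖x n‖⁻¹ : 𝕜) • x n
  have hv : ∀ n, ‖v n‖ = 1 := fun n ↦ norm_smul_inv_norm (hx0 n)
  have hSv : Tendsto (fun n ↦ S (v n)) atTop (𝓝 0) := by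
    refine squeeze_zero_norm (fun n ↦ ?_) tendsto_one_div_add_atTop_nhds_zero_nat
    have hxpos := norm_pos_iff.mpr (hx0 n)
    rw [map_smul, norm_smul, norm_inv, RCLike.norm_ofReal, abs_norm, inv_mul_le_iff₀ hxpos]
    simpa [mul_comm] using (hx n).le
  obtain ⟨z, φ, hφ, hz⟩ :=
    J.exists_tendsto_subseq_of_tendsto_sub_apply hK (fun n ↦ (hv n).le) hSv
  have hz1 : ‖z‖ = 1 := tendsto_nhds_unique hz.norm (by simp [hv])
  have hSz : S z = 0 :=
    tendsto_nhds_unique ((S.continuous.tendsto z).comp hz) (hSv.comp hφ.tendsto_atTop)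
  simp [hinj (hSz.trans (map_zero S).symm)] at hz1

end

section

variable {𝕜 E F : Type*} [RCLike 𝕜]
  [NormedAddCommGroup E] [InnerProductSpace 𝕜 E] [CompleteSpace E]
  [NormedAddCommGroup F] [NormedSpace 𝕜 F]

theorem LinearIsometry.isClosed_range_sub_of_isCompactOperator
    (J : E →ₗᵢ[𝕜] F) {K : E →L[𝕜] F} (hK : IsCompactOperator K) :
    IsClosed (Set.range (J.toContinuousLinearMap - K)) := by
  set S := J.toContinuousLinearMap - K
  set N := S.kerᗮ
  have hSN : (J.comp N.subtypeₗᵢ).toContinuousLinearMap - K.comp N.subtypeL = S.comp N.subtypeL :=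
    rfl
  have hinj : Function.Injective (S.comp N.subtypeL) := by
    refine (injective_iff_map_eq_zero _).mpr fun x hx ↦ Subtype.ext ?_
    exact Submodule.disjoint_def.mp S.ker.orthogonal_disjoint x (LinearMap.mem_ker.mpr hx) x.2
  obtain ⟨C, hC⟩ := (J.comp N.subtypeₗᵢ).exists_antilipschitzWith_sub_of_isCompactOperator
    (hK.comp_clm N.subtypeL) (hSN ▸ hinj)
  have hrange : Set.range (S.comp N.subtypeL) = Set.range S := by
    refine (Set.range_comp_subset_range N.subtypeL S).antisymm ?_
    rintro _ ⟨x, rfl⟩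
    refine ⟨⟨x - S.ker.starProjection x, S.ker.sub_starProjection_mem_orthogonal x⟩, ?_⟩
    have hk : S (S.ker.starProjection x) = 0 := S.ker.starProjection_apply_mem x
    simp [hk]
  rw [← hrange]
  exact hSN ▸ hC.isClosed_range (S.comp N.subtypeL).uniformContinuous

end

theorem ContinuousLinearMap.IsIdempotentElem.apply_eq_self_of_mem_range {R M : Type*} [Semiring R]
    [TopologicalSpace M] [AddCommMonoid M] [Module R M] {P : M →L[R] M} (hP : IsIdempotentElem P)
    {x : M} (hx : x ∈ P.range) : P x = x := by
  obtain ⟨y, rfl⟩ := hx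
  exact DFunLike.congr_fun hP y

section

variable {𝕜 E : Type*} [RCLike 𝕜] [NormedAddCommGroup E] [InnerProductSpace 𝕜 E]

theorem Submodule.subtypeL_comp_eq_sub {U V : Submodule 𝕜 E} {P Q : E →L[𝕜] E}
    (hP : ∀ x ∈ U, P x = x) {f : U →L[𝕜] V} (hf : ∀ x, (f x : E) = Q x) :
    V.subtypeL ∘L f = U.subtypeₗᵢ.toContinuousLinearMap - (P - Q) ∘L U.subtypeL := by
  ext x
  simp [hf, hP x x.2]

theorem finiteDimensional_ker_of_isCompactOperator_sub {U V : Submodule 𝕜 E} [CompleteSpace U]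
    {P Q : E →L[𝕜] E} (hP : ∀ x ∈ U, P x = x) (hPQ : IsCompactOperator (P - Q))
    {f : U →L[𝕜] V} (hf : ∀ x, (f x : E) = Q x) :
    FiniteDimensional 𝕜 f.ker := by
  have hker : f.ker = (V.subtypeL ∘L f).ker :=
    (LinearMap.ker_comp_of_ker_eq_bot _ V.ker_subtype).symm
  rw [hker, Submodule.subtypeL_comp_eq_sub hP hf]
  exact U.subtypeₗᵢ.finiteDimensional_ker_sub_of_isCompactOperator (hPQ.comp_clm _)

theorem isClosed_range_of_isCompactOperator_sub {U V : Submodule 𝕜 E} [CompleteSpace U]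
    (hV : IsClosed (V : Set E)) {P Q : E →L[𝕜] E} (hP : ∀ x ∈ U, P x = x)
    (hPQ : IsCompactOperator (P - Q)) {f : U →L[𝕜] V} (hf : ∀ x, (f x : E) = Q x) :
    IsClosed (Set.range f) := by
  have h := U.subtypeₗᵢ.isClosed_range_sub_of_isCompactOperator (K := (P - Q) ∘L U.subtypeL)
    (hPQ.comp_clm U.subtypeL)
  rw [← Submodule.subtypeL_comp_eq_sub hP hf, ContinuousLinearMap.coe_comp, Set.range_comp] at h
  exact hV.isClosedEmbedding_subtypeVal.isClosed_iff_image_isClosed.mpr h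

variable [CompleteSpace E]

theorem IsStarProjection.apply_eq_zero_of_mem_orthogonal_range {P Q : E →L[𝕜] E}
    (hP : IsStarProjection P) (hQ : IsSelfAdjoint Q) {V : Submodule 𝕜 E}
    (hQV : ∀ y ∈ V, Q y = y) {f : P.range →L[𝕜] V} (hf : ∀ x, (f x : E) = Q x) {w : V}
    (hw : w ∈ f.rangeᗮ) : P w = 0 := by
  set x : P.range := ⟨P w, LinearMap.mem_range_self (P : E →ₗ[𝕜] E) w⟩
  refine inner_self_eq_zero.mp <| calc
    ⟪P w, P w⟫_𝕜 = ⟪P (P w), w⟫_𝕜 := (hP.isSelfAdjoint.isSymmetric _ _).symm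
    _ = ⟪P w, Q w⟫_𝕜 := by
      rw [show P (P w) = P w from DFunLike.congr_fun hP.isIdempotentElem _, hQV w w.2]
    _ = ⟪f x, w⟫_𝕜 := by rw [Submodule.coe_inner, hf]; exact (hQ.isSymmetric _ _).symm
    _ = 0 := Submodule.inner_right_of_mem_orthogonal
      (LinearMap.mem_range_self (f : P.range →ₗ[𝕜] V) x) hw

theorem IsStarProjection.finiteDimensional_quotient_range {P Q : E →L[𝕜] E}
    (hP : IsStarProjection P) (hQ : IsStarProjection Q) (hPQ : IsCompactOperator (P - Q))
    {f : P.range →L[𝕜] Q.range} (hf : ∀ x, (f x : E) = Q x) (hclosed : IsClosed (Set.range f)) :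
    FiniteDimensional 𝕜 (Q.range ⧸ f.range) := by
  have : CompleteSpace Q.range :=
    (IsIdempotentElem.isClosed_range hQ.isIdempotentElem).completeSpace_coe
  have : CompleteSpace f.range := hclosed.completeSpace_coe
  have hQP : IsCompactOperator (Q - P) := by simpa using hPQ.neg
  set S := Q.range.subtypeₗᵢ.toContinuousLinearMap - (Q - P) ∘L Q.range.subtypeL
  have : FiniteDimensional 𝕜 S.ker :=
    Q.range.subtypeₗᵢ.finiteDimensional_ker_sub_of_isCompactOperator (hQP.comp_clm _)
  have hQV : ∀ y ∈ Q.range, Q y = y :=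
    fun _ ↦ IsIdempotentElem.apply_eq_self_of_mem_range hQ.isIdempotentElem
  have hle : f.rangeᗮ ≤ S.ker := fun w hw ↦ by
    simp [S, hQV w w.2, hP.apply_eq_zero_of_mem_orthogonal_range hQ.isSelfAdjoint hQV hf hw]
  have : FiniteDimensional 𝕜 f.rangeᗮ := Submodule.finiteDimensional_of_le hle
  exact (Submodule.quotientEquivOfIsCompl _ _ f.range.isCompl_orthogonal).symm.finiteDimensional

end

theorem stmt_16 {H : Type*}
    [NormedAddCommGroup H] [InnerProductSpace ℂ H] [CompleteSpace H]
    (P₁ P₂ : H →L[ℂ] H)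
    (hP₁sa : IsSelfAdjoint P₁) (hP₂sa : IsSelfAdjoint P₂)
    (hP₁ : P₁.comp P₁ = P₁) (hP₂ : P₂.comp P₂ = P₂)
    (hcpt : IsCompactOperator (⇑(P₁ - P₂)))
    (f : (LinearMap.range (P₁ : H →ₗ[ℂ] H)) →L[ℂ] (LinearMap.range (P₂ : H →ₗ[ℂ] H)))
    (hf : ∀ x : LinearMap.range (P₁ : H →ₗ[ℂ] H), (f x : H) = P₂ x) :
    FiniteDimensional ℂ (LinearMap.ker (f : (LinearMap.range (P₁ : H →ₗ[ℂ] H)) →ₗ[ℂ] (LinearMap.range (P₂ : H →ₗ[ℂ] H)))) ∧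
      FiniteDimensional ℂ
        ((LinearMap.range (P₂ : H →ₗ[ℂ] H)) ⧸
          LinearMap.range (f : (LinearMap.range (P₁ : H →ₗ[ℂ] H)) →ₗ[ℂ]
            (LinearMap.range (P₂ : H →ₗ[ℂ] H)))) ∧
      IsClosed (Set.range f) := by
  have hP₁' : IsStarProjection P₁ := ⟨hP₁, hP₁sa⟩
  have hP₂' : IsStarProjection P₂ := ⟨hP₂, hP₂sa⟩
  have : CompleteSpace P₁.range :=
    (IsIdempotentElem.isClosed_range hP₁).completeSpace_coe
  have hfix : ∀ x ∈ P₁.range, P₁ x = x :=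
    fun _ ↦ IsIdempotentElem.apply_eq_self_of_mem_range hP₁
  have hclosed : IsClosed (Set.range f) := isClosed_range_of_isCompactOperator_sub
    (IsIdempotentElem.isClosed_range hP₂) hfix hcpt hf
  exact ⟨finiteDimensional_ker_of_isCompactOperator_sub hfix hcpt hf,
    hP₁'.finiteDimensional_quotient_range hP₂' hcpt hf hclosed, hclosed⟩
end
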